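/- Let A be a balanced residuated poset satisfying (H4), write 1_x for the common value x\x = x/x, and define a ⊙ b = 1_b·a. Then ⊙ is a partition function for the monoid reduct of A, i.e., for all a, b, c, a₁, a₂ ∈ A: a ⊙ a = a; a ⊙ (b ⊙ c) = (a ⊙ b) ⊙ c; a ⊙ (b ⊙ c) = a ⊙ (c ⊙ b); (a₁·a₂) ⊙ b = (a₁ ⊙ b)·(a₂ ⊙ b); b ⊙ (a₁·a₂) = (b ⊙ a₁) ⊙ a₂; and b ⊙ 1 = b. Moreover, for all positive idempotents p ≤ q, the map a ↦ q·a sends A_p = {a : 1_a = p} into A_q = {a : 1_a = q}, sends p to q, and satisfies q·(a·b) = (q·a)·(q·b) for all a, b ∈ A_p. -/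
import Mathlib


/-- A residuated poset: a partially ordered monoid with residuals `ld` (`x \ z`)
and `rd` (`z / y`) satisfying the residuation law. -/
class ResiduatedPoset (α : Type*) extends PartialOrder α, Monoid α where
  ld : α → α → α
  rd : α → α → α
  mul_le_iff_le_rd : ∀ x y z : α, x * y ≤ z ↔ x ≤ rd z y
  mul_le_iff_le_ld : ∀ x y z : α, x * y ≤ z ↔ y ≤ ld x z

open ResiduatedPoset

section
variable {α : Type*} [ResiduatedPoset α]

lemma RP.mul_le_mul_right {a b : α} (h : a ≤ b) (c : α) : a * c ≤ b * c := by
  rw [mul_le_iff_le_rd]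
  exact h.trans ((mul_le_iff_le_rd b c (b*c)).mp le_rfl)

lemma RP.mul_le_mul_left {a b : α} (h : a ≤ b) (c : α) : c * a ≤ c * b := by
  rw [mul_le_iff_le_ld]
  exact h.trans ((mul_le_iff_le_ld c b (c*b)).mp le_rfl)

lemma RP.one_le_rd (x : α) : 1 ≤ rd x x :=
  (mul_le_iff_le_rd 1 x x).mp (by simp)

lemma RP.rd_mul_self (x : α) : rd x x * x = x := by
  refine le_antisymm ((mul_le_iff_le_rd _ x x).mpr le_rfl) ?_
  simpa using RP.mul_le_mul_right (RP.one_le_rd x) x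

lemma RP.pos_idem_rd {e : α} (h1 : 1 ≤ e) (h2 : e * e = e) : rd e e = e := by
  refine le_antisymm ?_ ((mul_le_iff_le_rd e e e).mp h2.le)
  calc rd e e = rd e e * 1 := (mul_one _).symm
    _ ≤ rd e e * e := RP.mul_le_mul_left h1 _
    _ = e := RP.rd_mul_self e

lemma RP.rd_idem (x : α) : rd x x * rd x x = rd x x := by
  refine le_antisymm ((mul_le_iff_le_rd _ x x).mp ?_) ?_
  · rw [mul_assoc, RP.rd_mul_self, RP.rd_mul_self]
  · simpa using RP.mul_le_mul_right (RP.one_le_rd x) (rd x x)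

lemma RP.rd_rd (x : α) : rd (rd x x) (rd x x) = rd x x :=
  RP.pos_idem_rd (RP.one_le_rd x) (RP.rd_idem x)

lemma RP.rd_comm (hH4 : ∀ x y : α, rd x x * rd y y = rd (x * y) (x * y)) (x y : α) :
    rd x x * rd y y = rd y y * rd x x := by
  have key : ∀ u v : α, rd u u * rd v v ≤ rd v v * rd u u := by
    intro u v
    have h1 : rd u u ≤ rd v v * rd u u := by
      simpa using RP.mul_le_mul_right (RP.one_le_rd v) (rd u u)
    have h2 : rd v v ≤ rd v v * rd u u := by
      simpa using RP.mul_le_mul_left (RP.one_le_rd u) (rd v v)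
    calc rd u u * rd v v ≤ (rd v v * rd u u) * (rd v v * rd u u) :=
          le_trans (RP.mul_le_mul_right h1 _) (RP.mul_le_mul_left h2 _)
      _ = rd (v*u) (v*u) * rd (v*u) (v*u) := by rw [hH4]
      _ = rd (v*u) (v*u) := RP.rd_idem _
      _ = rd v v * rd u u := (hH4 v u).symm
  exact le_antisymm (key x y) (key y x)

/-- sandwich: if rd e e = e then e * x * e = e * x, given balance and H4. -/
lemma RP.sandwich (hbal : ∀ x : α, ld x x = rd x x)
    (hH4 : ∀ x y : α, rd x x * rd y y = rd (x * y) (x * y))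
    {e : α} (he : rd e e = e) (x : α) : e * x * e = e * x := by
  have h1 : e * x ≤ e * x * e := by
    have := RP.mul_le_mul_left (RP.one_le_rd e) (e*x)
    rwa [mul_one, he] at this
  refine le_antisymm ?_ h1
  rw [mul_le_iff_le_ld, hbal, ← hH4, he]
  simpa using RP.mul_le_mul_left (RP.one_le_rd x) e

end

theorem stmt_12 {α : Type*} [ResiduatedPoset α] (hbal : ∀ x : α, ld x x = rd x x)
    (hH4 : ∀ x y : α, rd x x * rd y y = rd (x * y) (x * y))
    (odot : α → α → α) (hodot : ∀ a b : α, odot a b = rd b b * a) :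
    (∀ a : α, odot a a = a) ∧
    (∀ a b c : α, odot a (odot b c) = odot (odot a b) c) ∧
    (∀ a b c : α, odot a (odot b c) = odot a (odot c b)) ∧
    (∀ a₁ a₂ b : α, odot (a₁ * a₂) b = odot a₁ b * odot a₂ b) ∧
    (∀ a₁ a₂ b : α, odot b (a₁ * a₂) = odot (odot b a₁) a₂) ∧
    (∀ b : α, odot b 1 = b) ∧
    (∀ p q : α, (1 ≤ p ∧ p * p = p) → (1 ≤ q ∧ q * q = q) → p ≤ q →
      (∀ a : α, rd a a = p → rd (q * a) (q * a) = q) ∧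
      q * p = q ∧
      (∀ a b : α, rd a a = p → rd b b = p → q * (a * b) = (q * a) * (q * b))) := by
  refine ⟨fun a => by simp [hodot, RP.rd_mul_self], ?_, ?_, ?_, ?_, ?_, ?_⟩
  · intro a b c
    simp only [hodot, ← hH4, RP.rd_rd, mul_assoc]
  · intro a b c
    simp only [hodot, ← hH4, RP.rd_rd]
    rw [RP.rd_comm hH4]
  · intro a₁ a₂ b
    simp only [hodot]
    rw [← mul_assoc, ← mul_assoc, RP.sandwich hbal hH4 (RP.rd_rd b)]
  · intro a₁ a₂ b
    simp only [hodot, ← hH4]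
    rw [RP.rd_comm hH4, mul_assoc]
  · intro b
    have h1 : rd (1:α) 1 = 1 := RP.pos_idem_rd le_rfl (one_mul 1)
    simp [hodot, h1]
  · intro p q hp hq hpq
    have hqq : rd q q = q := RP.pos_idem_rd hq.1 hq.2
    have hqp : q * p = q := by
      refine le_antisymm ?_ ?_
      · calc q * p ≤ q * q := RP.mul_le_mul_left hpq q
          _ = q := hq.2
      · calc q = q * 1 := (mul_one q).symm
          _ ≤ q * p := RP.mul_le_mul_left hp.1 q
    refine ⟨fun a ha => by rw [← hH4, hqq, ha, hqp], hqp, ?_⟩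
    intro a b _ _
    conv_rhs => rw [← mul_assoc, RP.sandwich hbal hH4 hqq a, mul_assoc]
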